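/- arXiv:1902.02101 — 3 statements merged into one kernel-verified Lean document; each statement's English description precedes it below -/
import Mathlib

section
/- Let (𝔛, 𝔓, C) be a Gabor triple: C ⊂ H is a common core for the self-adjoint operators 𝔛 and 𝔓, and the Weyl relations e^{it𝔛}e^{is𝔓} = e^{-its}e^{is𝔓}e^{it𝔛} hold for all t,s ∈ R. Then 𝔛 and 𝔓 satisfy the weak canonical commutation relations: for all ψ, φ ∈ D(𝔛) ∩ D(𝔓), ⟨𝔛ψ, 𝔓φ⟩ − ⟨𝔓ψ, 𝔛φ⟩ = i⟨ψ, φ⟩. -/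
open Filter Topology

local notation "⟪" x ", " y "⟫" => @inner ℂ _ _ x y

lemma grp_inner_move {H : Type*} [NormedAddCommGroup H] [InnerProductSpace ℂ H]
    (W : ℝ → H →L[ℂ] H) (hgrp : ∀ t s : ℝ, W (t + s) = W t * W s) (h0 : W 0 = 1)
    (hW : ∀ (t : ℝ) (x : H), ‖W t x‖ = ‖x‖) (t : ℝ) (x y : H) :
    ⟪W t x, y⟫ = ⟪x, W (-t) y⟫ := by
  have hiso : ∀ (r : ℝ) (a b : H), ⟪W r a, W r b⟫ = ⟪a, b⟫ := fun r a b =>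
    LinearIsometry.inner_map_map ⟨(W r : H →ₗ[ℂ] H), hW r⟩ a b
  have hy : W t (W (-t) y) = y := by
    have := (hgrp t (-t)).symm
    rw [add_neg_cancel, h0] at this
    calc W t (W (-t) y) = (W t * W (-t)) y := rfl
    _ = y := by rw [this]; rfl
  conv_lhs => rw [← hy]
  rw [hiso]

lemma grp_deriv_neg {H : Type*} [NormedAddCommGroup H] [InnerProductSpace ℂ H]
    (W : ℝ → H →L[ℂ] H) (h0 : W 0 = 1) (ψ v : H)
    (hgen : HasDerivAt (fun r : ℝ => W r ψ) (W 0 v) 0) :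
    HasDerivAt (fun t : ℝ => W (-t) ψ) (-v) 0 := by
  have hg : HasDerivAt (fun r : ℝ => W r ψ) (W 0 v) (-(0:ℝ)) := by simpa using hgen
  have := hg.scomp (0:ℝ) (hasDerivAt_neg (0:ℝ))
  simpa [h0, Function.comp_def] using this


/-- let `(𝔛, 𝔓, C)` be a Gabor triple: `𝔛, 𝔓` are self-adjoint
(here: symmetric, densely defined) operators whose unitary groups
`U t = e^{it𝔛}`, `V s = e^{is𝔓}` satisfy the Weyl relations, and `C` is a
common core.  Then `𝔛, 𝔓` satisfy the weak canonical commutation relations: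
for all `ψ, φ ∈ D(𝔛) ∩ D(𝔓)`,
`⟪𝔛ψ, 𝔓φ⟫ − ⟪𝔓ψ, 𝔛φ⟫ = i ⟪ψ, φ⟫`. -/
theorem weak_canonical_commutation_relations
    {H : Type*} [NormedAddCommGroup H] [InnerProductSpace ℂ H] [CompleteSpace H]
    (X P : H →ₗ.[ℂ] H) (hXsa : IsSelfAdjoint X) (hPsa : IsSelfAdjoint P)
    (hXdense : Dense (X.domain : Set H)) (hPdense : Dense (P.domain : Set H))
    (U V : ℝ → H →L[ℂ] H)
    (hUgrp : ∀ t s : ℝ, U (t + s) = U t * U s)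
    (hVgrp : ∀ t s : ℝ, V (t + s) = V t * V s)
    (hU0 : U 0 = 1) (hV0 : V 0 = 1)
    (hUnitU : ∀ (t : ℝ) (x : H), ‖U t x‖ = ‖x‖)
    (hUnitV : ∀ (s : ℝ) (x : H), ‖V s x‖ = ‖x‖)
    -- `𝔛` generates `U` and `𝔓` generates `V` (Stone's theorem):
    (hUgen : ∀ (ψ : X.domain) (t : ℝ),
      HasDerivAt (fun s : ℝ => U s (ψ : H)) (U t (Complex.I • X ψ)) t)
    (hVgen : ∀ (ψ : P.domain) (t : ℝ),
      HasDerivAt (fun s : ℝ => V s (ψ : H)) (V t (Complex.I • P ψ)) t)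
    -- the Weyl relations:
    (hWeyl : ∀ t s : ℝ, U t * V s = Complex.exp (-(Complex.I * t * s)) • (V s * U t))
    -- `C` is a common core for `𝔛` and `𝔓`:
    (C : Submodule ℂ H) (hCX : C ≤ X.domain) (hCP : C ≤ P.domain)
    (hcore : ∀ (ψ : H) (hx : ψ ∈ X.domain) (hp : ψ ∈ P.domain),
      ∃ ξ : ℕ → C,
        Tendsto (fun i => (ξ i : H)) atTop (𝓝 ψ) ∧
        Tendsto (fun i => X ⟨(ξ i : H), hCX (ξ i).2⟩) atTop (𝓝 (X ⟨ψ, hx⟩)) ∧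
        Tendsto (fun i => P ⟨(ξ i : H), hCP (ξ i).2⟩) atTop (𝓝 (P ⟨ψ, hp⟩))) :
    ∀ (ψ φ : H) (hψx : ψ ∈ X.domain) (hψp : ψ ∈ P.domain)
      (hφx : φ ∈ X.domain) (hφp : φ ∈ P.domain),
      ⟪X ⟨ψ, hψx⟩, P ⟨φ, hφp⟩⟫ - ⟪P ⟨ψ, hψp⟩, X ⟨φ, hφx⟩⟫ =
        Complex.I * ⟪ψ, φ⟫ := by
  intro ψ φ hψx hψp hφx hφp
  set ψX : X.domain := ⟨ψ, hψx⟩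
  set φX : X.domain := ⟨φ, hφx⟩
  set ψP : P.domain := ⟨ψ, hψp⟩
  set φP : P.domain := ⟨φ, hφp⟩
  -- Weyl relation in inner product form
  have funeq1 : ∀ t s : ℝ, ⟪U (-t) ψ, V s φ⟫
      = Complex.exp (-(Complex.I * t * s)) * ⟪V (-s) ψ, U t φ⟫ := by
    intro t s
    have h1 : ⟪U (-t) ψ, V s φ⟫ = ⟪ψ, U t (V s φ)⟫ := by
      simpa using grp_inner_move U hUgrp hU0 hUnitU (-t) ψ (V s φ)
    have h2 : U t (V s φ) = Complex.exp (-(Complex.I * t * s)) • (V s (U t φ)) := by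
      have := congrArg (fun A : H →L[ℂ] H => A φ) (hWeyl t s)
      simpa using this
    have h3 : ⟪ψ, V s (U t φ)⟫ = ⟪V (-s) ψ, U t φ⟫ := by
      simpa using (grp_inner_move V hVgrp hV0 hUnitV (-s) ψ (U t φ)).symm
    rw [h1, h2, inner_smul_right, h3]
  -- derivatives of t ↦ U (-t) ψ and s ↦ V (-s) ψ at 0
  have hUψ' : HasDerivAt (fun t : ℝ => U (-t) ψ) (-(Complex.I • (X ψX : H))) 0 :=
    grp_deriv_neg U hU0 ψ _ (hUgen ψX 0)
  have hVψ' : HasDerivAt (fun s : ℝ => V (-s) ψ) (-(Complex.I • (P ψP : H))) 0 :=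
    grp_deriv_neg V hV0 ψ _ (hVgen ψP 0)
  -- step 1: differentiate in t at 0, for each fixed s
  have eq1 : ∀ s : ℝ,
      Complex.I * ⟪(X ψX : H), V s φ⟫
        = -(Complex.I * s) * ⟪V (-s) ψ, φ⟫ + Complex.I * ⟪V (-s) ψ, (X φX : H)⟫ := by
    intro s
    have hL : HasDerivAt (fun t : ℝ => ⟪U (-t) ψ, V s φ⟫)
        (Complex.I * ⟪(X ψX : H), V s φ⟫) 0 := by
      have := HasDerivAt.inner ℂ hUψ' (hasDerivAt_const (0:ℝ) (V s φ))
      simpa [inner_smul_left, Complex.conj_I, neg_mul, neg_neg] using this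
    have hexp : HasDerivAt (fun t : ℝ => Complex.exp (-(Complex.I * t * s)))
        (-(Complex.I * s)) 0 := by
      have he : HasDerivAt (fun t : ℝ => (-(Complex.I * (s:ℂ))) * (t:ℂ))
          (-(Complex.I * s)) 0 := by
        simpa using (Complex.ofRealCLM.hasDerivAt (x := (0:ℝ))).const_mul
          (-(Complex.I * (s:ℂ)))
      have hfe : (fun t : ℝ => Complex.exp ((-(Complex.I * (s:ℂ))) * (t:ℂ)))
          = (fun t : ℝ => Complex.exp (-(Complex.I * t * s))) := by
        funext t; ring_nf
      have := he.cexp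
      rw [hfe] at this
      simpa using this
    have hinner : HasDerivAt (fun t : ℝ => ⟪V (-s) ψ, U t φ⟫)
        (Complex.I * ⟪V (-s) ψ, (X φX : H)⟫) 0 := by
      have := HasDerivAt.inner ℂ (hasDerivAt_const (0:ℝ) (V (-s) ψ)) (hUgen φX 0)
      simpa [hU0, inner_smul_right] using this
    have hR : HasDerivAt
        (fun t : ℝ => Complex.exp (-(Complex.I * t * s)) * ⟪V (-s) ψ, U t φ⟫)
        (-(Complex.I * s) * ⟪V (-s) ψ, φ⟫ + Complex.I * ⟪V (-s) ψ, (X φX : H)⟫) 0 := by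
      have := hexp.mul hinner
      have hUφ0 : U 0 φ = φ := by rw [hU0]; rfl
      simpa [hUφ0, Pi.mul_def] using this
    have hfe2 : (fun t : ℝ => ⟪U (-t) ψ, V s φ⟫)
        = (fun t : ℝ => Complex.exp (-(Complex.I * t * s)) * ⟪V (-s) ψ, U t φ⟫) := by
      funext t; exact funeq1 t s
    exact (hfe2 ▸ hL).unique hR
  -- step 2: differentiate eq1 in s at 0
  have hD1 : HasDerivAt (fun s : ℝ => Complex.I * ⟪(X ψX : H), V s φ⟫)
      (Complex.I * (Complex.I * ⟪(X ψX : H), (P φP : H)⟫)) 0 := by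
    have := (HasDerivAt.inner ℂ (hasDerivAt_const (0:ℝ) ((X ψX : H))) (hVgen φP 0)).const_mul
      Complex.I
    simpa [hV0, inner_smul_right] using this
  have hc : HasDerivAt (fun s : ℝ => -(Complex.I * (s:ℂ))) (-Complex.I) 0 := by
    simpa [Pi.neg_def] using ((Complex.ofRealCLM.hasDerivAt (x := (0:ℝ))).const_mul Complex.I).neg
  have hinner1 : HasDerivAt (fun s : ℝ => ⟪V (-s) ψ, φ⟫)
      (Complex.I * ⟪(P ψP : H), φ⟫) 0 := by
    have := HasDerivAt.inner ℂ hVψ' (hasDerivAt_const (0:ℝ) φ)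
    simpa [inner_smul_left, Complex.conj_I, neg_mul, neg_neg] using this
  have hinner2 : HasDerivAt (fun s : ℝ => ⟪V (-s) ψ, (X φX : H)⟫)
      (Complex.I * ⟪(P ψP : H), (X φX : H)⟫) 0 := by
    have := HasDerivAt.inner ℂ hVψ' (hasDerivAt_const (0:ℝ) ((X φX : H)))
    simpa [inner_smul_left, Complex.conj_I, neg_mul, neg_neg] using this
  have hD2 : HasDerivAt
      (fun s : ℝ => -(Complex.I * s) * ⟪V (-s) ψ, φ⟫ + Complex.I * ⟪V (-s) ψ, (X φX : H)⟫)
      (-(Complex.I * ⟪ψ, φ⟫) + Complex.I * (Complex.I * ⟪(P ψP : H), (X φX : H)⟫)) 0 := by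
    have hVψ0 : V (-(0:ℝ)) ψ = ψ := by rw [neg_zero, hV0]; rfl
    have := (hc.mul hinner1).add (hinner2.const_mul Complex.I)
    simpa [hVψ0, hV0, Pi.mul_def, Pi.add_def] using this
  have hfe3 : (fun s : ℝ => Complex.I * ⟪(X ψX : H), V s φ⟫)
      = (fun s : ℝ => -(Complex.I * s) * ⟪V (-s) ψ, φ⟫
          + Complex.I * ⟪V (-s) ψ, (X φX : H)⟫) := by
    funext s; exact eq1 s
  have key := (hfe3 ▸ hD1).unique hD2
  have hII : Complex.I * Complex.I = -1 := Complex.I_mul_I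
  linear_combination -key + (⟪(X ψX : H), (P φP : H)⟫ - ⟪(P ψP : H), (X φX : H)⟫) * hII
end

section
/- (Abstract Balian–Low theorem) Let (𝔛, 𝔓, C) be a Gabor triple, Γ ⊂ R^2 a lattice generated by vectors a, b, and V ⊂ H a closed subspace invariant under all e^{is𝔛} and e^{is𝔓}. Let T_{m,n} = T(a)^m T(b)^n where T(z) = e^{iRe(z)Im(z)/2} e^{iRe(z)𝔛} e^{iIm(z)𝔓}. If φ_0 ∈ V is such that {T_{m,n}φ_0}_{ m,n ∈ Z} is a complete orthonormal system for V, then either φ_0 ∉ D(𝔛) or φ_0 ∉ D(𝔓). -/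
/-!
Suppose `φ₀` lies in both domains and put `x = 𝔛 φ₀`, `y = 𝔓 φ₀`; both lie in `S`, being
derivatives of orbits in the closed invariant subspace `S`. Differentiating `⟪U t φ₀, T(z) φ₀⟫` at
`t = 0` in two ways (directly, and after moving `T(z)` across `U t` by the Weyl relation) gives
`⟪x, T(z) φ₀⟫ = ⟪T(-z) φ₀, x⟫ - z₂ ⟪T(-z) φ₀, φ₀⟫`, and similarly for `y`. At the lattice points
the correction term vanishes by orthonormality, so the Gabor coefficients of `x` and `y` at
`(m, n)` are a common unimodular multiple of their conjugated coefficients at `(-m, -n)`, and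
Parseval's identity yields `⟪x, y⟫ = ⟪y, x⟫`. But the same identity at `z = (0, s)`,
differentiated in `s`, is the canonical commutation relation `⟪x, y⟫ - ⟪y, x⟫ = i ‖φ₀‖² ≠ 0`.
-/

open Filter Topology

local notation "⟪" x ", " y "⟫" => @inner ℂ _ _ x y

/-- The Weyl operator `T(z) = e^{i z₁ z₂ /2} e^{i z₁ 𝔛} e^{i z₂ 𝔓}` associated
to the unitary groups `U t = e^{it𝔛}`, `V s = e^{is𝔓}`, for `z ∈ ℝ² ≅ ℂ`. -/
noncomputable def weylOpR2 {H : Type*} [NormedAddCommGroup H] [NormedSpace ℂ H]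
    (U V : ℝ → H →L[ℂ] H) (w : ℝ × ℝ) : H →L[ℂ] H :=
  Complex.exp (Complex.I * w.1 * w.2 / 2) • (U w.1 * V w.2)

/-- The operators `T_{m,n} = T(a)^m T(b)^n` of the generalized Gabor frame
associated to the lattice generated by `a, b ∈ ℝ²` (along a fixed ray the
projective phases cancel, so `T(a)^m = T(m·a)`). -/
noncomputable def gaborOp {H : Type*} [NormedAddCommGroup H] [NormedSpace ℂ H]
    (U V : ℝ → H →L[ℂ] H) (a b : ℝ × ℝ) (m n : ℤ) : H →L[ℂ] H :=
  weylOpR2 U V ((m : ℝ) • a) * weylOpR2 U V ((n : ℝ) • b)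

open Complex

section HilbertSubspace

variable {𝕜 E ι : Type*} [RCLike 𝕜] [NormedAddCommGroup E] [InnerProductSpace 𝕜 E] [CompleteSpace E]
  {S : Submodule 𝕜 E} {e : ι → E}

theorem Orthonormal.tsum_inner_mul_inner_of_complete (hS : IsClosed (S : Set E))
    (he : Orthonormal 𝕜 e) (heS : ∀ i, e i ∈ S)
    (hcomplete : ∀ ψ ∈ S, (∀ i, inner 𝕜 (e i) ψ = 0) → ψ = 0) {u v : E} (hu : u ∈ S) (hv : v ∈ S) :
    ∑' i, inner 𝕜 u (e i) * inner 𝕜 (e i) v = inner 𝕜 u v := by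
  have : CompleteSpace S := hS.completeSpace_coe
  let e' : ι → S := fun i => ⟨e i, heS i⟩
  have hbot : (Submodule.span 𝕜 (Set.range e'))ᗮ = ⊥ := by
    refine (Submodule.eq_bot_iff _).2 fun ψ hψ => Subtype.ext (hcomplete ψ ψ.2 fun i => ?_)
    exact (Submodule.mem_orthogonal _ ψ).1 hψ _ (Submodule.subset_span ⟨i, rfl⟩)
  have he' : Orthonormal 𝕜 e' := he.codRestrict S heS
  have h := (HilbertBasis.mkOfOrthogonalEqBot he' hbot).tsum_inner_mul_inner ⟨u, hu⟩ ⟨v, hv⟩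
  rw [HilbertBasis.coe_mkOfOrthogonalEqBot] at h
  exact h

theorem Orthonormal.inner_comm_of_inner_eq_mul_inner (hS : IsClosed (S : Set E))
    (he : Orthonormal 𝕜 e) (heS : ∀ i, e i ∈ S)
    (hcomplete : ∀ ψ ∈ S, (∀ i, inner 𝕜 (e i) ψ = 0) → ψ = 0) (σ : ι ≃ ι) {c : ι → 𝕜}
    (hc : ∀ i, ‖c i‖ = 1) {u v : E} (hu : u ∈ S) (hv : v ∈ S)
    (hcu : ∀ i, inner 𝕜 u (e i) = c i * inner 𝕜 (e (σ i)) u)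
    (hcv : ∀ i, inner 𝕜 v (e i) = c i * inner 𝕜 (e (σ i)) v) :
    inner 𝕜 u v = inner 𝕜 v u := by
  have hterm : ∀ i, inner 𝕜 u (e i) * inner 𝕜 (e i) v
      = inner 𝕜 v (e (σ i)) * inner 𝕜 (e (σ i)) u := fun i => by
    rw [hcu, ← inner_conj_symm (e i) v, hcv, map_mul, inner_conj_symm]
    have hci : c i * starRingEnd 𝕜 (c i) = 1 := by simp [RCLike.mul_conj, hc i]
    linear_combination (inner 𝕜 (e (σ i)) u * inner 𝕜 v (e (σ i))) * hci
  rw [← he.tsum_inner_mul_inner_of_complete hS heS hcomplete hu hv, tsum_congr hterm,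
    σ.tsum_eq (fun j => inner 𝕜 v (e j) * inner 𝕜 (e j) u),
    he.tsum_inner_mul_inner_of_complete hS heS hcomplete hv hu]

end HilbertSubspace

section Derivatives

variable {𝕜 F : Type*} [NontriviallyNormedField 𝕜] [NormedAddCommGroup F] [NormedSpace 𝕜 F]

theorem HasDerivAt.mem_of_forall_mem {S : Submodule 𝕜 F} (hS : IsClosed (S : Set F))
    {g : 𝕜 → F} {L : F} {t : 𝕜} (hg : ∀ s, g s ∈ S) (h : HasDerivAt g L t) : L ∈ S := by
  have hL : L ∈ closure (Submodule.span 𝕜 (g '' Set.univ) : Set F) :=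
    range_deriv_subset_closure_span_image g dense_univ ⟨t, h.deriv⟩
  refine hS.closure_subset_iff.2 ?_ hL
  exact Submodule.span_le.2 (by rintro _ ⟨s, -, rfl⟩; exact hg s)

theorem HasDerivAt.comp_neg_zero {f : 𝕜 → F} {v : F} (h : HasDerivAt f v 0) :
    HasDerivAt (fun t => f (-t)) (-v) 0 := by
  simpa [Function.comp_def] using h.scomp_of_eq 0 (hasDerivAt_neg (0 : 𝕜)) neg_zero.symm

end Derivatives

theorem hasDerivAt_cexp_mul_ofReal (c : ℂ) (t : ℝ) :
    HasDerivAt (fun s : ℝ => exp (c * s)) (c * exp (c * t)) t := by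
  simpa [mul_comm] using ((hasDerivAt_id t).ofReal_comp.const_mul c).cexp

def symplecticForm (z w : ℝ × ℝ) : ℝ := z.1 * w.2 - z.2 * w.1

section WeylOperator

variable {E : Type*} [NormedAddCommGroup E] [NormedSpace ℂ E] {U V : ℝ → E →L[ℂ] E}

theorem weylOpR2_zero_mk (hU : U 0 = 1) (s : ℝ) : weylOpR2 U V (0, s) = V s := by
  simp [weylOpR2, hU]

theorem weylOpR2_zero (hU : U 0 = 1) (hV : V 0 = 1) : weylOpR2 U V 0 = 1 := by
  rw [← Prod.mk_zero_zero, weylOpR2_zero_mk hU, hV]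

theorem gaborOp_zero_zero (hU : U 0 = 1) (hV : V 0 = 1) (a b : ℝ × ℝ) :
    gaborOp U V a b 0 0 = 1 := by
  simp [gaborOp, weylOpR2_zero hU hV]

theorem gaborOp_apply_mem {S : Submodule ℂ E}
    (hSinv : ∀ (s : ℝ) (ψ : E), ψ ∈ S → U s ψ ∈ S ∧ V s ψ ∈ S)
    (a b : ℝ × ℝ) (m n : ℤ) {ψ : E} (hψ : ψ ∈ S) : gaborOp U V a b m n ψ ∈ S := by
  have hW : ∀ z {φ}, φ ∈ S → weylOpR2 U V z φ ∈ S := fun z φ hφ =>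
    S.smul_mem _ (hSinv _ _ (hSinv _ _ hφ).2).1
  exact hW _ (hW _ hψ)

end WeylOperator

section WeylPair

variable {H : Type*} [NormedAddCommGroup H] [InnerProductSpace ℂ H]

structure IsUnitaryGroup (U : ℝ → H →L[ℂ] H) : Prop where
  map_add : ∀ t s, U (t + s) = U t * U s
  map_zero : U 0 = 1
  norm_map : ∀ t x, ‖U t x‖ = ‖x‖

namespace IsUnitaryGroup

variable {U : ℝ → H →L[ℂ] H} (hU : IsUnitaryGroup U)
include hU

theorem apply_apply (t s : ℝ) (x : H) : U t (U s x) = U (t + s) x := by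
  rw [hU.map_add]; rfl

theorem apply_neg_apply (t : ℝ) (x : H) : U t (U (-t) x) = x := by
  rw [hU.apply_apply, add_neg_cancel, hU.map_zero]; rfl

theorem inner_apply_left (t : ℝ) (x y : H) : ⟪U t x, y⟫ = ⟪x, U (-t) y⟫ := by
  conv_lhs => rw [← hU.apply_neg_apply t y]
  exact LinearIsometry.inner_map_map ⟨(U t : H →ₗ[ℂ] H), hU.norm_map t⟩ x _

theorem inner_apply_right (t : ℝ) (x y : H) : ⟪x, U t y⟫ = ⟪U (-t) x, y⟫ := by
  rw [hU.inner_apply_left, neg_neg]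

theorem comp_neg : IsUnitaryGroup fun t => U (-t) where
  map_add t s := by rw [neg_add, hU.map_add]
  map_zero := by rw [neg_zero, hU.map_zero]
  norm_map t := hU.norm_map (-t)

end IsUnitaryGroup

structure IsWeylPair (U V : ℝ → H →L[ℂ] H) : Prop where
  left : IsUnitaryGroup U
  right : IsUnitaryGroup V
  mul_eq_smul_mul : ∀ t s : ℝ, U t * V s = exp (-(I * t * s)) • (V s * U t)

namespace IsWeylPair

variable {U V : ℝ → H →L[ℂ] H} (hUV : IsWeylPair U V)
include hUV

theorem apply_apply_comm (t s : ℝ) (x : H) : V s (U t x) = exp (I * t * s) • U t (V s x) := by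
  rw [← mul_apply_eq_comp, ← mul_apply_eq_comp, hUV.mul_eq_smul_mul, smul_apply, smul_smul,
    ← exp_add, add_neg_cancel, exp_zero, one_smul]

/-- The generators of the swapped pair are `𝔓` and `-𝔛`. -/
theorem swap : IsWeylPair V fun t => U (-t) where
  left := hUV.right
  right := hUV.left.comp_neg
  mul_eq_smul_mul t s := by
    ext x
    simp only [smul_apply, mul_apply_eq_comp, hUV.apply_apply_comm]
    push_cast
    ring_nf

theorem weylOpR2_swap (z : ℝ × ℝ) :
    weylOpR2 V (fun t => U (-t)) (z.2, -z.1) = weylOpR2 U V z := by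
  ext x
  simp only [weylOpR2, smul_apply, mul_apply_eq_comp, neg_neg, hUV.apply_apply_comm, smul_smul,
    ← exp_add]
  push_cast
  ring_nf

theorem weylOpR2_apply_apply (z : ℝ × ℝ) (t : ℝ) (x : H) :
    weylOpR2 U V z (U t x) = exp (I * t * z.2) • U t (weylOpR2 U V z x) := by
  simp only [weylOpR2, smul_apply, mul_apply_eq_comp, hUV.apply_apply_comm, map_smul,
    hUV.left.apply_apply, smul_smul, ← exp_add, add_comm t]
  ring_nf

theorem inner_weylOpR2_right (z : ℝ × ℝ) (x y : H) :
    ⟪x, weylOpR2 U V z y⟫ = ⟪weylOpR2 U V (-z) x, y⟫ := by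
  simp only [weylOpR2, smul_apply, mul_apply_eq_comp, inner_smul_left, inner_smul_right,
    hUV.left.inner_apply_right, hUV.right.inner_apply_right, hUV.apply_apply_comm,
    Prod.fst_neg, Prod.snd_neg, ← exp_conj, map_mul, map_div₀, map_ofNat, conj_I, conj_ofReal,
    ← mul_assoc, ← exp_add]
  push_cast
  ring_nf

theorem weylOpR2_mul (z w : ℝ × ℝ) :
    weylOpR2 U V z * weylOpR2 U V w =
      exp (-(I * symplecticForm z w / 2)) • weylOpR2 U V (z + w) := by
  ext x
  simp only [weylOpR2, symplecticForm, smul_apply, mul_apply_eq_comp, map_smul,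
    hUV.apply_apply_comm, hUV.left.apply_apply, hUV.right.apply_apply, smul_smul, ← exp_add,
    Prod.fst_add, Prod.snd_add]
  push_cast
  ring_nf

theorem gaborOp_eq (a b : ℝ × ℝ) (m n : ℤ) :
    gaborOp U V a b m n =
      exp (-(I * (m * n * symplecticForm a b) / 2)) • weylOpR2 U V ((m : ℝ) • a + (n : ℝ) • b) := by
  rw [gaborOp, hUV.weylOpR2_mul]
  congr 3
  simp only [symplecticForm, Prod.smul_fst, Prod.smul_snd, smul_eq_mul]
  push_cast
  ring

/-- Both sides come from the derivative at `t = 0` of `⟪U t ψ, T(z) ψ⟫`, computed directly and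
after moving `T(z)` across `U t` with the Weyl relation. -/
theorem inner_weylOpR2_of_hasDerivAt_left {ψ x : H}
    (hx : HasDerivAt (fun t => U t ψ) (I • x) 0) (z : ℝ × ℝ) :
    ⟪x, weylOpR2 U V z ψ⟫ = ⟪weylOpR2 U V (-z) ψ, x⟫ - z.2 * ⟪weylOpR2 U V (-z) ψ, ψ⟫ := by
  have hcomm : (fun t => ⟪U t ψ, weylOpR2 U V z ψ⟫) =
      fun t : ℝ => exp (I * z.2 * t) * ⟪weylOpR2 U V (-z) ψ, U (-t) ψ⟫ := by
    funext t
    rw [hUV.inner_weylOpR2_right, hUV.weylOpR2_apply_apply, inner_smul_left,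
      hUV.left.inner_apply_left, ← exp_conj]
    simp only [map_mul, map_neg, conj_I, conj_ofReal, Prod.snd_neg, ofReal_neg]
    ring_nf
  have hlhs : HasDerivAt (fun t => ⟪U t ψ, weylOpR2 U V z ψ⟫) ⟪I • x, weylOpR2 U V z ψ⟫ 0 :=
    (hx.inner ℂ (hasDerivAt_const (0 : ℝ) _)).congr_deriv (by rw [inner_zero_right, zero_add])
  have hrhs : HasDerivAt (fun t : ℝ => exp (I * z.2 * t) * ⟪weylOpR2 U V (-z) ψ, U (-t) ψ⟫)
      (I * z.2 * ⟪weylOpR2 U V (-z) ψ, ψ⟫ + ⟪weylOpR2 U V (-z) ψ, -(I • x)⟫) 0 :=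
    ((hasDerivAt_cexp_mul_ofReal (I * z.2) 0).mul ((hasDerivAt_const (0 : ℝ) _).inner ℂ
      hx.comp_neg_zero)).congr_deriv (by simp [hUV.left.map_zero])
  have h := hlhs.unique (hcomm ▸ hrhs)
  simp only [inner_smul_left, inner_smul_right, inner_neg_right, conj_I] at h
  linear_combination (norm := (ring_nf; simp only [I_sq]; ring)) I * h

theorem inner_weylOpR2_of_hasDerivAt_right {ψ y : H}
    (hy : HasDerivAt (fun s => V s ψ) (I • y) 0) (z : ℝ × ℝ) :
    ⟪y, weylOpR2 U V z ψ⟫ = ⟪weylOpR2 U V (-z) ψ, y⟫ + z.1 * ⟪weylOpR2 U V (-z) ψ, ψ⟫ := by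
  have h := hUV.swap.inner_weylOpR2_of_hasDerivAt_left hy (z.2, -z.1)
  have hneg := hUV.weylOpR2_swap (-z)
  simp only [Prod.fst_neg, Prod.snd_neg, Prod.neg_mk] at h hneg
  rw [hUV.weylOpR2_swap, hneg] at h
  simpa using h

theorem inner_sub_inner_of_hasDerivAt {ψ x y : H}
    (hx : HasDerivAt (fun t => U t ψ) (I • x) 0) (hy : HasDerivAt (fun s => V s ψ) (I • y) 0) :
    ⟪x, y⟫ - ⟪y, x⟫ = I * ⟪ψ, ψ⟫ := by
  have hcomm : (fun s : ℝ => ⟪x, V s ψ⟫) =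
      fun s : ℝ => ⟪V (-s) ψ, x⟫ - s * ⟪V (-s) ψ, ψ⟫ := by
    funext s
    simpa [weylOpR2_zero_mk hUV.left.map_zero] using
      hUV.inner_weylOpR2_of_hasDerivAt_left hx (0, s)
  have hneg := hy.comp_neg_zero
  have hlhs : HasDerivAt (fun s : ℝ => ⟪x, V s ψ⟫) ⟪x, I • y⟫ 0 :=
    ((hasDerivAt_const (0 : ℝ) x).inner ℂ hy).congr_deriv (by rw [inner_zero_left, add_zero])
  have hrhs : HasDerivAt (fun s : ℝ => ⟪V (-s) ψ, x⟫ - s * ⟪V (-s) ψ, ψ⟫)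
      (⟪-(I • y), x⟫ - ⟪ψ, ψ⟫) 0 :=
    ((hneg.inner ℂ (hasDerivAt_const (0 : ℝ) x)).sub ((hasDerivAt_id (0 : ℝ)).ofReal_comp.mul
      (hneg.inner ℂ (hasDerivAt_const (0 : ℝ) ψ)))).congr_deriv (by simp [hUV.right.map_zero])
  have h := hlhs.unique (hcomm ▸ hrhs)
  simp only [inner_smul_left, inner_smul_right, inner_neg_left, conj_I] at h
  linear_combination (norm := (ring_nf; simp only [I_sq]; ring)) -I * h

theorem inner_gaborOp_eq_mul_inner_neg (ℓ : ℝ × ℝ → ℂ) (hℓ : ℓ 0 = 0) {φ x : H}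
    (hx : ∀ z, ⟪x, weylOpR2 U V z φ⟫ = ⟪weylOpR2 U V (-z) φ, x⟫ + ℓ z * ⟪weylOpR2 U V (-z) φ, φ⟫)
    (a b : ℝ × ℝ)
    (horth : ∀ m n : ℤ, ⟪gaborOp U V a b m n φ, φ⟫ = if m = 0 ∧ n = 0 then 1 else 0) (m n : ℤ) :
    ⟪x, gaborOp U V a b m n φ⟫ =
      exp (-(I * (m * n * symplecticForm a b))) * ⟪gaborOp U V a b (-m) (-n) φ, x⟫ := by
  set c := exp (-(I * (m * n * symplecticForm a b) / 2))
  set z : ℝ × ℝ := (m : ℝ) • a + (n : ℝ) • b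
  have hpos : gaborOp U V a b m n = c • weylOpR2 U V z := hUV.gaborOp_eq a b m n
  have hneg : gaborOp U V a b (-m) (-n) = c • weylOpR2 U V (-z) := by
    rw [hUV.gaborOp_eq]
    congr 2
    · push_cast; ring
    · simp only [z, Int.cast_neg, neg_smul, neg_add]
  have hc : starRingEnd ℂ c * c = 1 := by
    rw [← exp_conj, ← exp_add]
    simp only [map_neg, map_div₀, map_mul, map_ofNat, map_intCast, conj_I, conj_ofReal]
    ring_nf
    exact exp_zero
  have hcc : exp (-(I * (m * n * symplecticForm a b))) = c * c := by
    rw [← exp_add]; ring_nf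
  have hextra : ℓ z * ⟪weylOpR2 U V (-z) φ, φ⟫ = 0 := by
    have h := horth (-m) (-n)
    rw [hneg, smul_apply, inner_smul_left] at h
    by_cases hmn : m = 0 ∧ n = 0
    · simp [z, hmn, hℓ]
    · rw [if_neg (by omega)] at h
      simp [(mul_eq_zero.1 h).resolve_left (by simp [c])]
  rw [hpos, hneg, smul_apply, smul_apply, inner_smul_right, inner_smul_left, hx, hextra, hcc]
  linear_combination -(c * ⟪weylOpR2 U V (-z) φ, x⟫) * hc

end IsWeylPair

end WeylPair

theorem abstract_balian_low_general
    {H : Type*} [NormedAddCommGroup H] [InnerProductSpace ℂ H] [CompleteSpace H]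
    (X P : H →ₗ.[ℂ] H)
    (U V : ℝ → H →L[ℂ] H)
    (hUgrp : ∀ t s : ℝ, U (t + s) = U t * U s)
    (hVgrp : ∀ t s : ℝ, V (t + s) = V t * V s)
    (hU0 : U 0 = 1) (hV0 : V 0 = 1)
    (hUnitU : ∀ (t : ℝ) (x : H), ‖U t x‖ = ‖x‖)
    (hUnitV : ∀ (s : ℝ) (x : H), ‖V s x‖ = ‖x‖)
    (hUgen : ∀ (ψ : X.domain) (t : ℝ),
      HasDerivAt (fun s : ℝ => U s (ψ : H)) (U t (Complex.I • X ψ)) t)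
    (hVgen : ∀ (ψ : P.domain) (t : ℝ),
      HasDerivAt (fun s : ℝ => V s (ψ : H)) (V t (Complex.I • P ψ)) t)
    (hWeyl : ∀ t s : ℝ, U t * V s = Complex.exp (-(Complex.I * t * s)) • (V s * U t))
    -- the lattice `Γ` is generated by linearly independent `a, b ∈ ℝ²`:
    (a b : ℝ × ℝ)
    -- `S` is a closed subspace invariant under the unitary groups:
    (S : Submodule ℂ H) (hSclosed : IsClosed (S : Set H))
    (hSinv : ∀ (s : ℝ) (ψ : H), ψ ∈ S → U s ψ ∈ S ∧ V s ψ ∈ S)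
    -- `{T_{m,n} φ₀}` is a complete orthonormal system for `S`:
    (φ₀ : H) (hφ₀S : φ₀ ∈ S)
    (horth : ∀ m n m' n' : ℤ,
      ⟪gaborOp U V a b m n φ₀, gaborOp U V a b m' n' φ₀⟫ =
        if m = m' ∧ n = n' then (1 : ℂ) else 0)
    (hcomplete : ∀ ψ ∈ S, (∀ m n : ℤ, ⟪gaborOp U V a b m n φ₀, ψ⟫ = 0) → ψ = 0) :
    φ₀ ∉ X.domain ∨ φ₀ ∉ P.domain := by
  by_contra! ⟨hX, hP⟩
  have hUV : IsWeylPair U V := ⟨⟨hUgrp, hU0, hUnitU⟩, ⟨hVgrp, hV0, hUnitV⟩, hWeyl⟩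
  set x := X ⟨φ₀, hX⟩
  set y := P ⟨φ₀, hP⟩
  have hx : HasDerivAt (fun t => U t φ₀) (I • x) 0 := by simpa [hU0] using hUgen ⟨φ₀, hX⟩ 0
  have hy : HasDerivAt (fun s => V s φ₀) (I • y) 0 := by simpa [hV0] using hVgen ⟨φ₀, hP⟩ 0
  have hxS : x ∈ S := (S.smul_mem_iff I_ne_zero).1 <|
    hx.mem_of_forall_mem (S := S.restrictScalars ℝ) hSclosed fun t => (hSinv t φ₀ hφ₀S).1
  have hyS : y ∈ S := (S.smul_mem_iff I_ne_zero).1 <|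
    hy.mem_of_forall_mem (S := S.restrictScalars ℝ) hSclosed fun s => (hSinv s φ₀ hφ₀S).2
  have horth₀ : ∀ m n : ℤ, ⟪gaborOp U V a b m n φ₀, φ₀⟫ = if m = 0 ∧ n = 0 then 1 else 0 := by
    simpa [gaborOp_zero_zero hU0 hV0] using fun m n => horth m n 0 0
  have he : Orthonormal ℂ fun i : ℤ × ℤ => gaborOp U V a b i.1 i.2 φ₀ :=
    orthonormal_iff_ite.2 fun i j => by simpa [Prod.ext_iff] using horth i.1 i.2 j.1 j.2
  have hsymm : ⟪x, y⟫ = ⟪y, x⟫ :=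
    he.inner_comm_of_inner_eq_mul_inner hSclosed (fun i => gaborOp_apply_mem hSinv a b i.1 i.2 hφ₀S)
      (fun ψ hψ h => hcomplete ψ hψ fun m n => h (m, n)) (Equiv.neg _)
      (c := fun i => exp (-(I * (i.1 * i.2 * symplecticForm a b)))) (fun i => by simp [norm_exp])
      hxS hyS
      (fun i => hUV.inner_gaborOp_eq_mul_inner_neg (fun z => -z.2) (by simp)
        (fun z => by rw [hUV.inner_weylOpR2_of_hasDerivAt_left hx]; ring) a b horth₀ i.1 i.2)
      (fun i => hUV.inner_gaborOp_eq_mul_inner_neg (fun z => z.1) (by simp)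
        (hUV.inner_weylOpR2_of_hasDerivAt_right hy) a b horth₀ i.1 i.2)
  have hnorm : ⟪φ₀, φ₀⟫ = 1 := by simpa [gaborOp_zero_zero hU0 hV0] using horth₀ 0 0
  have hccr := hUV.inner_sub_inner_of_hasDerivAt hx hy
  rw [hsymm, sub_self, hnorm, mul_one] at hccr
  exact I_ne_zero hccr.symm

/-- abstract Balian–Low theorem: let `(𝔛, 𝔓, C)` be a Gabor
triple (self-adjoint operators with a common core whose unitary groups satisfy
the Weyl relations), `Γ ⊂ ℝ²` the lattice generated by linearly independent
vectors `a, b`, and `S ⊂ H` a closed subspace invariant under all `e^{is𝔛}`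
and `e^{is𝔓}`.  If `φ₀ ∈ S` is such that `{T_{m,n} φ₀}_{m,n ∈ ℤ}` is a
complete orthonormal system for `S`, then `φ₀ ∉ D(𝔛)` or `φ₀ ∉ D(𝔓)`. -/
theorem abstract_balian_low
    {H : Type*} [NormedAddCommGroup H] [InnerProductSpace ℂ H] [CompleteSpace H]
    (X P : H →ₗ.[ℂ] H) (hXsa : IsSelfAdjoint X) (hPsa : IsSelfAdjoint P)
    (U V : ℝ → H →L[ℂ] H)
    (hUgrp : ∀ t s : ℝ, U (t + s) = U t * U s)
    (hVgrp : ∀ t s : ℝ, V (t + s) = V t * V s)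
    (hU0 : U 0 = 1) (hV0 : V 0 = 1)
    (hUnitU : ∀ (t : ℝ) (x : H), ‖U t x‖ = ‖x‖)
    (hUnitV : ∀ (s : ℝ) (x : H), ‖V s x‖ = ‖x‖)
    (hUgen : ∀ (ψ : X.domain) (t : ℝ),
      HasDerivAt (fun s : ℝ => U s (ψ : H)) (U t (Complex.I • X ψ)) t)
    (hVgen : ∀ (ψ : P.domain) (t : ℝ),
      HasDerivAt (fun s : ℝ => V s (ψ : H)) (V t (Complex.I • P ψ)) t)
    (hWeyl : ∀ t s : ℝ, U t * V s = Complex.exp (-(Complex.I * t * s)) • (V s * U t))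
    (C : Submodule ℂ H) (hCX : C ≤ X.domain) (hCP : C ≤ P.domain)
    (hcore : ∀ (ψ : H) (hx : ψ ∈ X.domain) (hp : ψ ∈ P.domain),
      ∃ ξ : ℕ → C,
        Tendsto (fun i => (ξ i : H)) atTop (𝓝 ψ) ∧
        Tendsto (fun i => X ⟨(ξ i : H), hCX (ξ i).2⟩) atTop (𝓝 (X ⟨ψ, hx⟩)) ∧
        Tendsto (fun i => P ⟨(ξ i : H), hCP (ξ i).2⟩) atTop (𝓝 (P ⟨ψ, hp⟩)))
    -- the lattice `Γ` is generated by linearly independent `a, b ∈ ℝ²`: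
    (a b : ℝ × ℝ) (hab : LinearIndependent ℝ ![a, b])
    -- `S` is a closed subspace invariant under the unitary groups:
    (S : Submodule ℂ H) (hSclosed : IsClosed (S : Set H))
    (hSinv : ∀ (s : ℝ) (ψ : H), ψ ∈ S → U s ψ ∈ S ∧ V s ψ ∈ S)
    -- `{T_{m,n} φ₀}` is a complete orthonormal system for `S`:
    (φ₀ : H) (hφ₀S : φ₀ ∈ S)
    (horth : ∀ m n m' n' : ℤ,
      ⟪gaborOp U V a b m n φ₀, gaborOp U V a b m' n' φ₀⟫ =
        if m = m' ∧ n = n' then (1 : ℂ) else 0)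
    (hcomplete : ∀ ψ ∈ S, (∀ m n : ℤ, ⟪gaborOp U V a b m n φ₀, ψ⟫ = 0) → ψ = 0) :
    φ₀ ∉ X.domain ∨ φ₀ ∉ P.domain :=
  abstract_balian_low_general X P U V hUgrp hVgrp hU0 hV0 hUnitU hUnitV hUgen hVgen hWeyl a b S
    hSclosed hSinv φ₀ hφ₀S horth hcomplete
end

section
/- (Delocalization of Landau eigenbasis) Let b > 0 and let V be the eigenspace of the Landau Hamiltonian H_L corresponding to a Landau level E_n = b(n + 1/2). Suppose φ_0 ∈ V generates, via the magnetic translations T_{m,n} = e^{im G̃_1} e^{in G_2} with G̃_1 = −bG_1, an orthonormal basis {T_{m,n}φ_0} of V. Then φ_0 cannot lie in both D(X_1) and D(X_2); equivalently, ||X_1 φ_0|| ||X_2 φ_0|| = +∞. -/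
open Filter Topology

local notation "⟪" x ", " y "⟫" => @inner ℂ _ _ x y

/-- delocalization of a Landau eigenbasis: work in an abstract
Hilbert space `H` (think `L²(ℝ²)`), with self-adjoint operators `G̃₁ = −bG₁`,
`G₂`, `K₁`, `K₂`, `X₁`, `X₂` and `H_L` of the Landau model, `b > 0`.
`(G̃₁, G₂, C_c^∞)` is a Gabor triple (common core `C`, Weyl relations for the
associated unitary groups `U, V`), the key identities
`X₁ = −(1/b)(G̃₁ + K₂)`, `X₂ = G₂ + K₁` hold, `S` is the (closed, invariant)
eigenspace of `H_L` for the Landau level `E_n = b(n + 1/2)`, and every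
eigenvector in `S` lies in the domains of `K₁` and `K₂`.
If `φ₀ ∈ S` generates via the magnetic translations
`T_{m,n} = e^{imG̃₁} e^{inG₂}` an orthonormal basis `{T_{m,n} φ₀}` of `S`,
then `φ₀` cannot lie in both `D(X₁)` and `D(X₂)`
(equivalently, `‖X₁φ₀‖ ‖X₂φ₀‖ = +∞`). -/
theorem landau_eigenbasis_delocalization
    {H : Type*} [NormedAddCommGroup H] [InnerProductSpace ℂ H] [CompleteSpace H]
    (b : ℝ) (hb : 0 < b) (nLL : ℕ)
    (G1t G2 K1 K2 X1 X2 HL : H →ₗ.[ℂ] H)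
    (hG1sa : IsSelfAdjoint G1t) (hG2sa : IsSelfAdjoint G2)
    (hX1sa : IsSelfAdjoint X1) (hX2sa : IsSelfAdjoint X2)
    (hHLsa : IsSelfAdjoint HL)
    (U V : ℝ → H →L[ℂ] H)
    (hUgrp : ∀ t s : ℝ, U (t + s) = U t * U s)
    (hVgrp : ∀ t s : ℝ, V (t + s) = V t * V s)
    (hU0 : U 0 = 1) (hV0 : V 0 = 1)
    (hUnitU : ∀ (t : ℝ) (x : H), ‖U t x‖ = ‖x‖)
    (hUnitV : ∀ (s : ℝ) (x : H), ‖V s x‖ = ‖x‖)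
    (hUgen : ∀ (ψ : G1t.domain) (t : ℝ),
      HasDerivAt (fun s : ℝ => U s (ψ : H)) (U t (Complex.I • G1t ψ)) t)
    (hVgen : ∀ (ψ : G2.domain) (t : ℝ),
      HasDerivAt (fun s : ℝ => V s (ψ : H)) (V t (Complex.I • G2 ψ)) t)
    -- the Weyl relations `e^{itG̃₁}e^{isG₂} = e^{-its}e^{isG₂}e^{itG̃₁}`:
    (hWeyl : ∀ t s : ℝ, U t * V s = Complex.exp (-(Complex.I * t * s)) • (V s * U t))
    -- `C` (think `C_c^∞(ℝ²)`) is a common core for `G̃₁` and `G₂`: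
    (C : Submodule ℂ H) (hCX : C ≤ G1t.domain) (hCP : C ≤ G2.domain)
    (hcore : ∀ (ψ : H) (hx : ψ ∈ G1t.domain) (hp : ψ ∈ G2.domain),
      ∃ ξ : ℕ → C,
        Tendsto (fun i => (ξ i : H)) atTop (𝓝 ψ) ∧
        Tendsto (fun i => G1t ⟨(ξ i : H), hCX (ξ i).2⟩) atTop (𝓝 (G1t ⟨ψ, hx⟩)) ∧
        Tendsto (fun i => G2 ⟨(ξ i : H), hCP (ξ i).2⟩) atTop (𝓝 (G2 ⟨ψ, hp⟩)))
    -- the key identities `X₁ = −(1/b)(G̃₁ + K₂)` and `X₂ = G₂ + K₁`: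
    (hid1 : ∀ (ψ : H) (h1 : ψ ∈ X1.domain) (h2 : ψ ∈ K2.domain),
      ∃ hg : ψ ∈ G1t.domain,
        X1 ⟨ψ, h1⟩ = (-(1 / b) : ℂ) • (G1t ⟨ψ, hg⟩ + K2 ⟨ψ, h2⟩))
    (hid2 : ∀ (ψ : H) (h1 : ψ ∈ X2.domain) (h2 : ψ ∈ K1.domain),
      ∃ hg : ψ ∈ G2.domain, X2 ⟨ψ, h1⟩ = G2 ⟨ψ, hg⟩ + K1 ⟨ψ, h2⟩)
    -- conversely, membership in the domains follows by linearity: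
    (hdom1 : ∀ (ψ : H), ψ ∈ X1.domain → ψ ∈ K2.domain → ψ ∈ G1t.domain)
    (hdom2 : ∀ (ψ : H), ψ ∈ X2.domain → ψ ∈ K1.domain → ψ ∈ G2.domain)
    -- `S` is the eigenspace of `H_L` for the Landau level `E_n = b(n + 1/2)`:
    (S : Submodule ℂ H) (hSclosed : IsClosed (S : Set H))
    (hS : ∀ ψ : H, ψ ∈ S ↔ ∃ h : ψ ∈ HL.domain,
      HL ⟨ψ, h⟩ = ((b * (nLL + 1 / 2) : ℝ) : ℂ) • ψ)
    (hSinv : ∀ (s : ℝ) (ψ : H), ψ ∈ S → U s ψ ∈ S ∧ V s ψ ∈ S)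
    -- eigenvectors of `H_L` lie in the domains of `K₁` and `K₂`:
    (hSK : ∀ ψ : H, ψ ∈ S → ψ ∈ K1.domain ∧ ψ ∈ K2.domain)
    -- `{T_{m,n} φ₀}` is an orthonormal basis of `S`:
    (φ₀ : H) (hφ₀S : φ₀ ∈ S) (hφ₀ : φ₀ ≠ 0)
    (horth : ∀ m n m' n' : ℤ,
      ⟪gaborOp U V (1, 0) (0, 1) m n φ₀, gaborOp U V (1, 0) (0, 1) m' n' φ₀⟫ =
        if m = m' ∧ n = n' then (1 : ℂ) else 0)
    (hcomplete : ∀ ψ ∈ S,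
      (∀ m n : ℤ, ⟪gaborOp U V (1, 0) (0, 1) m n φ₀, ψ⟫ = 0) → ψ = 0) :
    ¬ (φ₀ ∈ X1.domain ∧ φ₀ ∈ X2.domain) := by
  
  rintro ⟨hX1, hX2⟩
  classical
  obtain ⟨hK1d, hK2d⟩ := hSK φ₀ hφ₀S
  have hgA : φ₀ ∈ G1t.domain := hdom1 φ₀ hX1 hK2d
  have hgB : φ₀ ∈ G2.domain := hdom2 φ₀ hX2 hK1d
  set a : H := G1t ⟨φ₀, hgA⟩ with ha
  set bv : H := G2 ⟨φ₀, hgB⟩ with hbv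
  set ia : H := (Complex.I : ℂ) • a with hia
  set ib : H := (Complex.I : ℂ) • bv with hib
  -- unitary group algebra
  have mU : ∀ (t s : ℝ) (x : H), U t (U s x) = U (t + s) x := by
    intro t s x; rw [hUgrp]; rfl
  have mV : ∀ (t s : ℝ) (x : H), V t (V s x) = V (t + s) x := by
    intro t s x; rw [hVgrp]; rfl
  have u0 : ∀ x : H, U 0 x = x := fun x => by rw [hU0]; rfl
  have v0 : ∀ x : H, V 0 x = x := fun x => by rw [hV0]; rfl
  have innU : ∀ (t : ℝ) (x y : H), ⟪U t x, U t y⟫ = ⟪x, y⟫ := fun t x y =>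
    LinearIsometry.inner_map_map ⟨(U t).toLinearMap, hUnitU t⟩ x y
  have innV : ∀ (s : ℝ) (x y : H), ⟪V s x, V s y⟫ = ⟪x, y⟫ := fun s x y =>
    LinearIsometry.inner_map_map ⟨(V s).toLinearMap, hUnitV s⟩ x y
  have wU : ∀ (t : ℝ) (x y : H), ⟪U t x, y⟫ = ⟪x, U (-t) y⟫ := by
    intro t x y
    have h : U t (U (-t) y) = y := by rw [mU, add_neg_cancel, u0]
    conv_lhs => rw [← h]
    exact innU t x (U (-t) y)
  have wV : ∀ (s : ℝ) (x y : H), ⟪V s x, y⟫ = ⟪x, V (-s) y⟫ := by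
    intro s x y
    have h : V s (V (-s) y) = y := by rw [mV, add_neg_cancel, v0]
    conv_lhs => rw [← h]
    exact innV s x (V (-s) y)
  have wc' : ∀ (t s : ℝ) (x : H),
      U t (V s x) = Complex.exp (-(Complex.I * t * s)) • V s (U t x) := by
    intro t s x
    have h := congrArg (fun (L : H →L[ℂ] H) => L x) (hWeyl t s)
    simpa using h
  have wc : ∀ (t s : ℝ) (x : H),
      V s (U t x) = Complex.exp (Complex.I * t * s) • U t (V s x) := by
    intro t s x
    have h1 : Complex.exp (Complex.I * t * s) * Complex.exp (-(Complex.I * t * s)) = 1 := by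
      rw [← Complex.exp_add, add_neg_cancel, Complex.exp_zero]
    calc V s (U t x)
        = (Complex.exp (Complex.I * t * s) * Complex.exp (-(Complex.I * t * s))) •
            V s (U t x) := by rw [h1, one_smul]
      _ = Complex.exp (Complex.I * t * s) •
            (Complex.exp (-(Complex.I * t * s)) • V s (U t x)) := by rw [← smul_smul]
      _ = Complex.exp (Complex.I * t * s) • U t (V s x) := by rw [← wc']
  -- the Gabor family
  set e : ℤ × ℤ → H := fun p => U (p.1 : ℝ) (V (p.2 : ℝ) φ₀) with he
  have gb : ∀ m n : ℤ, gaborOp U V (1, 0) (0, 1) m n φ₀ = e (m, n) := by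
    intro m n
    simp [gaborOp, weylOpR2, hU0, hV0, Prod.smul_mk, he]
  have horthE : ∀ p q : ℤ × ℤ, ⟪e p, e q⟫ = if p = q then (1 : ℂ) else 0 := by
    intro p q
    have h := horth p.1 p.2 q.1 q.2
    rw [gb, gb] at h
    simpa [Prod.ext_iff] using h
  have e00 : e (0, 0) = φ₀ := by simp [he, u0, v0]
  have e00' : e 0 = φ₀ := e00
  have hnorm : ⟪φ₀, φ₀⟫ = (1 : ℂ) := by
    have h := horthE (0, 0) (0, 0)
    rw [e00, if_pos rfl] at h; exact h
  have hmemS : ∀ p : ℤ × ℤ, e p ∈ S := by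
    intro p
    exact (hSinv _ _ ((hSinv _ _ hφ₀S).2)).1
  -- derivative helpers
  have hUg : ∀ t : ℝ, HasDerivAt (fun s : ℝ => U s φ₀) (U t ia) t := by
    intro t
    have h := hUgen ⟨φ₀, hgA⟩ t
    rw [hia, ha]
    exact h
  have hVg : ∀ t : ℝ, HasDerivAt (fun s : ℝ => V s φ₀) (V t ib) t := by
    intro t
    have h := hVgen ⟨φ₀, hgB⟩ t
    rw [hib, hbv]
    exact h
  have dInner_r : ∀ (c : H) (f : ℝ → H) (f' : H) (t : ℝ), HasDerivAt f f' t →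
      HasDerivAt (fun s => ⟪c, f s⟫) ⟪c, f'⟫ t := by
    intro c f f' t hf
    have h := (((innerSL ℂ c).restrictScalars ℝ).hasFDerivAt).comp_hasDerivAt t hf
    simpa [Function.comp_def] using h
  have dConj : ∀ (f : ℝ → ℂ) (d : ℂ) (t : ℝ), HasDerivAt f d t →
      HasDerivAt (fun s => (starRingEnd ℂ) (f s)) ((starRingEnd ℂ) d) t := by
    intro f d t hf
    have h := (Complex.conjCLE.toContinuousLinearMap.hasFDerivAt).comp_hasDerivAt t hf
    exact h
  have dInner_l : ∀ (c : H) (f : ℝ → H) (f' : H) (t : ℝ), HasDerivAt f f' t →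
      HasDerivAt (fun s => ⟪f s, c⟫) ⟪f', c⟫ t := by
    intro c f f' t hf
    have h := dConj _ _ _ (dInner_r c f f' t hf)
    simp only [inner_conj_symm] at h
    exact h
  have dNeg : ∀ (f : ℝ → ℂ) (d : ℂ), HasDerivAt f d 0 →
      HasDerivAt (fun t : ℝ => f (-t)) (-d) 0 := by
    intro f d hf
    have h0 : HasDerivAt f d (-(0 : ℝ)) := by simpa using hf
    have h := h0.scomp (0 : ℝ) (hasDerivAt_neg' (0 : ℝ))
    simpa [Function.comp_def] using h
  have dExp : ∀ c₀ c₁ : ℂ,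
      HasDerivAt (fun t : ℝ => Complex.exp (c₀ + c₁ * t)) (c₁ * Complex.exp c₀) 0 := by
    intro c₀ c₁
    have h1 : HasDerivAt (fun t : ℝ => (t : ℂ)) 1 (0 : ℝ) := by
      simpa using (hasDerivAt_id (0 : ℝ)).ofReal_comp
    have h4 := ((h1.const_mul c₁).const_add c₀).cexp
    simpa [mul_comm] using h4
  -- a and bv belong to S
  have hmem_lim : ∀ (w : H), HasDerivAt (fun s : ℝ => U s φ₀) w 0 → w ∈ S := by
    intro w hd
    have ht := hasDerivAt_iff_tendsto_slope.1 hd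
    refine hSclosed.mem_of_tendsto ht ?_
    refine Filter.eventually_of_mem self_mem_nhdsWithin ?_
    intro t _
    rw [slope_def_module]
    refine Submodule.smul_of_tower_mem S _ (S.sub_mem ?_ ?_)
    · exact (hSinv t φ₀ hφ₀S).1
    · rw [u0]; exact hφ₀S
  have hmem_limV : ∀ (w : H), HasDerivAt (fun s : ℝ => V s φ₀) w 0 → w ∈ S := by
    intro w hd
    have ht := hasDerivAt_iff_tendsto_slope.1 hd
    refine hSclosed.mem_of_tendsto ht ?_
    refine Filter.eventually_of_mem self_mem_nhdsWithin ?_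
    intro t _
    rw [slope_def_module]
    refine Submodule.smul_of_tower_mem S _ (S.sub_mem ?_ ?_)
    · exact (hSinv t φ₀ hφ₀S).2
    · rw [v0]; exact hφ₀S
  have hiaS : ia ∈ S := by
    refine hmem_lim ia ?_
    have h := hUg 0
    simpa [u0] using h
  have hibS : ib ∈ S := by
    refine hmem_limV ib ?_
    have h := hVg 0
    simpa [v0] using h
  have haS : a ∈ S := by
    have h : a = (-Complex.I) • ia := by
      rw [hia, smul_smul]
      simp [Complex.I_mul_I]
    rw [h]; exact S.smul_mem _ hiaS
  have hbS : bv ∈ S := by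
    have h : bv = (-Complex.I) • ib := by
      rw [hib, smul_smul]
      simp [Complex.I_mul_I]
    rw [h]; exact S.smul_mem _ hibS
  -- Battle symmetry identities
  have hEmn : ∀ m n : ℤ, e (m, n) = U (m : ℝ) (V (n : ℝ) φ₀) := by intro m n; simp [he]
  have hEmn' : ∀ m n : ℤ, e (-(m, n)) = U (-(m : ℝ)) (V (-(n : ℝ)) φ₀) := by
    intro m n; simp [he]
  have hdelta : ∀ m n : ℤ, ⟪φ₀, e (m, n)⟫ = if (0, 0) = ((m, n) : ℤ × ℤ) then (1 : ℂ) else 0 := by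
    intro m n
    have h := horthE (0, 0) (m, n)
    rwa [e00] at h
  have IdA : ∀ p : ℤ × ℤ, ⟪e (-p), a⟫
      = Complex.exp (Complex.I * (p.1 : ℂ) * (p.2 : ℂ)) * ⟪a, e p⟫ := by
    rintro ⟨m, n⟩
    have idEq : ∀ t : ℝ, ⟪e (-(m, n)), U t φ₀⟫
        = Complex.exp (Complex.I * (m : ℂ) * (n : ℂ) + (Complex.I * (n : ℂ)) * (t : ℂ)) *
          ⟪U (-t) φ₀, e (m, n)⟫ := by
      intro t
      rw [hEmn', hEmn]
      rw [wU, neg_neg, mU]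
      rw [wV, neg_neg]
      rw [wc ((m : ℝ) + t) (n : ℝ) φ₀, inner_smul_right]
      rw [wU, neg_neg, mU, add_comm t (m : ℝ)]
      congr 2
      push_cast
      ring
    have hL : HasDerivAt (fun t : ℝ => ⟪e (-(m, n)), U t φ₀⟫) ⟪e (-(m, n)), ia⟫ 0 := by
      have h := dInner_r (e (-(m, n))) _ _ 0 (hUg 0)
      simpa [u0] using h
    have hP : HasDerivAt (fun t : ℝ => ⟪U (-t) φ₀, e (m, n)⟫) (-⟪ia, e (m, n)⟫) 0 := by
      have h : HasDerivAt (fun t : ℝ => ⟪U t φ₀, e (m, n)⟫) ⟪ia, e (m, n)⟫ 0 := by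
        have h0 := dInner_l (e (m, n)) _ _ 0 (hUg 0)
        simpa [u0] using h0
      exact dNeg _ _ h
    have hexp := dExp (Complex.I * (m : ℂ) * (n : ℂ)) (Complex.I * (n : ℂ))
    have hR := hexp.mul hP
    rw [funext idEq] at hL
    have huniq := hL.unique hR
    have hval : ⟪e (-(m, n)), ia⟫
        = Complex.I * (n : ℂ) * Complex.exp (Complex.I * (m : ℂ) * (n : ℂ)) * ⟪φ₀, e (m, n)⟫
          + Complex.exp (Complex.I * (m : ℂ) * (n : ℂ)) * (-⟪ia, e (m, n)⟫) := by
      simpa [u0] using huniq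
    have hzero : Complex.I * (n : ℂ) * Complex.exp (Complex.I * (m : ℂ) * (n : ℂ)) *
        ⟪φ₀, e (m, n)⟫ = 0 := by
      rw [hdelta m n]
      by_cases h : ((0, 0) : ℤ × ℤ) = (m, n)
      · have hn : (n : ℂ) = 0 := by
          have : (0 : ℤ) = n := congrArg Prod.snd h
          simp [← this]
        simp [hn]
      · rw [if_neg h, mul_zero]
    rw [hzero, zero_add] at hval
    -- unfold ia
    rw [hia, inner_smul_right, inner_smul_left] at hval
    have hval2 : Complex.I * ⟪e (-(m, n)), a⟫
        = Complex.I * (Complex.exp (Complex.I * (m : ℂ) * (n : ℂ)) * ⟪a, e (m, n)⟫) := by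
      rw [hval]
      simp [Complex.conj_I]
      ring
    exact mul_left_cancel₀ Complex.I_ne_zero hval2
  have IdB : ∀ p : ℤ × ℤ, ⟪e (-p), bv⟫
      = Complex.exp (Complex.I * (p.1 : ℂ) * (p.2 : ℂ)) * ⟪bv, e p⟫ := by
    rintro ⟨m, n⟩
    have idEq : ∀ s : ℝ, ⟪e (-(m, n)), V s φ₀⟫
        = Complex.exp (Complex.I * (m : ℂ) * (n : ℂ) + (-(Complex.I * (m : ℂ))) * (s : ℂ)) *
          ⟪V (-s) φ₀, e (m, n)⟫ := by
      intro s
      rw [hEmn', hEmn]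
      rw [wU, neg_neg]
      rw [wc' (m : ℝ) s φ₀, inner_smul_right]
      rw [wV, neg_neg, mV]
      rw [wc (m : ℝ) ((n : ℝ) + s) φ₀, inner_smul_right]
      conv_rhs =>
        rw [wV, neg_neg]
        rw [wc (m : ℝ) s (V (n : ℝ) φ₀), inner_smul_right, mV, add_comm s (n : ℝ)]
      rw [← mul_assoc, ← mul_assoc, ← Complex.exp_add, ← Complex.exp_add]
      congr 2
      push_cast
      ring
    have hL : HasDerivAt (fun s : ℝ => ⟪e (-(m, n)), V s φ₀⟫) ⟪e (-(m, n)), ib⟫ 0 := by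
      have h := dInner_r (e (-(m, n))) _ _ 0 (hVg 0)
      simpa [v0] using h
    have hP : HasDerivAt (fun s : ℝ => ⟪V (-s) φ₀, e (m, n)⟫) (-⟪ib, e (m, n)⟫) 0 := by
      have h : HasDerivAt (fun s : ℝ => ⟪V s φ₀, e (m, n)⟫) ⟪ib, e (m, n)⟫ 0 := by
        have h0 := dInner_l (e (m, n)) _ _ 0 (hVg 0)
        simpa [v0] using h0
      exact dNeg _ _ h
    have hexp := dExp (Complex.I * (m : ℂ) * (n : ℂ)) (-(Complex.I * (m : ℂ)))
    have hR := hexp.mul hP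
    rw [funext idEq] at hL
    have huniq := hL.unique hR
    have hval : ⟪e (-(m, n)), ib⟫
        = -(Complex.I * (m : ℂ)) * Complex.exp (Complex.I * (m : ℂ) * (n : ℂ)) * ⟪φ₀, e (m, n)⟫
          + Complex.exp (Complex.I * (m : ℂ) * (n : ℂ)) * (-⟪ib, e (m, n)⟫) := by
      simpa [v0] using huniq
    have hzero : -(Complex.I * (m : ℂ)) * Complex.exp (Complex.I * (m : ℂ) * (n : ℂ)) *
        ⟪φ₀, e (m, n)⟫ = 0 := by
      rw [hdelta m n]
      by_cases h : ((0, 0) : ℤ × ℤ) = (m, n)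
      · have hm : (m : ℂ) = 0 := by
          have : (0 : ℤ) = m := congrArg Prod.fst h
          simp [← this]
        simp [hm]
      · rw [if_neg h, mul_zero]
    rw [hzero, zero_add] at hval
    rw [hib, inner_smul_right, inner_smul_left] at hval
    have hval2 : Complex.I * ⟪e (-(m, n)), bv⟫
        = Complex.I * (Complex.exp (Complex.I * (m : ℂ) * (n : ℂ)) * ⟪bv, e (m, n)⟫) := by
      rw [hval]
      simp [Complex.conj_I]
      ring
    exact mul_left_cancel₀ Complex.I_ne_zero hval2
  -- the weak canonical commutation relation
  have idEq0 : ∀ t s : ℝ, ⟪U t φ₀, V s φ₀⟫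
      = Complex.exp (0 + (Complex.I * (t : ℂ)) * (s : ℂ)) *
        (starRingEnd ℂ) ⟪U (-t) φ₀, V (-s) φ₀⟫ := by
    intro t s
    have h1 : ⟪U t φ₀, V s φ₀⟫ = ⟪V (-s) (U t φ₀), φ₀⟫ := by
      rw [wV, neg_neg]
    rw [h1, wc t (-s) φ₀, inner_smul_left, wU]
    have hvec : ⟪V (-s) φ₀, U (-t) φ₀⟫ = (starRingEnd ℂ) ⟪U (-t) φ₀, V (-s) φ₀⟫ :=
      (inner_conj_symm _ _).symm
    have hconj : (starRingEnd ℂ) (Complex.exp (Complex.I * (t : ℂ) * ((-s : ℝ) : ℂ)))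
        = Complex.exp (0 + (Complex.I * (t : ℂ)) * (s : ℂ)) := by
      rw [← Complex.exp_conj]
      congr 1
      simp only [map_mul, map_neg, Complex.conj_I, Complex.conj_ofReal, Complex.ofReal_neg, zero_add]
      ring
    rw [hvec, hconj]
  have key1 : ∀ t : ℝ, ⟪U t φ₀, ib⟫
      = (Complex.I * (t : ℂ)) * ⟪φ₀, U (-t) φ₀⟫ + -(⟪ib, U (-t) φ₀⟫) := by
    intro t
    have hL : HasDerivAt (fun s : ℝ => ⟪U t φ₀, V s φ₀⟫) ⟪U t φ₀, ib⟫ 0 := by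
      have h := dInner_r (U t φ₀) _ _ 0 (hVg 0)
      simpa [v0] using h
    have hCin : HasDerivAt (fun s : ℝ => ⟪U (-t) φ₀, V (-s) φ₀⟫) (-⟪U (-t) φ₀, ib⟫) 0 := by
      have h : HasDerivAt (fun s : ℝ => ⟪U (-t) φ₀, V s φ₀⟫) ⟪U (-t) φ₀, ib⟫ 0 := by
        have h0 := dInner_r (U (-t) φ₀) _ _ 0 (hVg 0)
        simpa [v0] using h0
      exact dNeg _ _ h
    have hC := dConj _ _ _ hCin
    have hexp := dExp (0 : ℂ) (Complex.I * (t : ℂ))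
    have hR := hexp.mul hC
    rw [funext (idEq0 t)] at hL
    have huniq := hL.unique hR
    calc ⟪U t φ₀, ib⟫
        = Complex.I * ↑t * Complex.exp 0 *
            (starRingEnd ℂ) ⟪U (-t) φ₀, V (-(0:ℝ)) φ₀⟫
          + Complex.exp (0 + Complex.I * ↑t * ((0:ℝ) : ℂ)) *
            (starRingEnd ℂ) (-⟪U (-t) φ₀, ib⟫) := huniq
      _ = (Complex.I * (t : ℂ)) * ⟪φ₀, U (-t) φ₀⟫ + -(⟪ib, U (-t) φ₀⟫) := by
          simp [v0, inner_conj_symm]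
  have hcomm : ⟪a, bv⟫ = Complex.I + ⟪bv, a⟫ := by
    have hL : HasDerivAt (fun t : ℝ => ⟪U t φ₀, ib⟫) ⟪ia, ib⟫ 0 := by
      have h := dInner_l ib _ _ 0 (hUg 0)
      simpa [u0] using h
    have h1 : HasDerivAt (fun t : ℝ => (Complex.I * (t : ℂ))) Complex.I 0 := by
      have h0 : HasDerivAt (fun t : ℝ => (t : ℂ)) 1 (0 : ℝ) := by
        simpa using (hasDerivAt_id (0 : ℝ)).ofReal_comp
      simpa using h0.const_mul Complex.I
    have h2 : HasDerivAt (fun t : ℝ => ⟪φ₀, U (-t) φ₀⟫) (-⟪φ₀, ia⟫) 0 := by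
      have h : HasDerivAt (fun t : ℝ => ⟪φ₀, U t φ₀⟫) ⟪φ₀, ia⟫ 0 := by
        have h0 := dInner_r φ₀ _ _ 0 (hUg 0)
        simpa [u0] using h0
      exact dNeg _ _ h
    have h3 : HasDerivAt (fun t : ℝ => ⟪ib, U (-t) φ₀⟫) (-⟪ib, ia⟫) 0 := by
      have h : HasDerivAt (fun t : ℝ => ⟪ib, U t φ₀⟫) ⟪ib, ia⟫ 0 := by
        have h0 := dInner_r ib _ _ 0 (hUg 0)
        simpa [u0] using h0
      exact dNeg _ _ h
    have hR := (h1.mul h2).add h3.neg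
    rw [funext key1] at hL
    have huniq := hL.unique hR
    have hval : ⟪ia, ib⟫ = Complex.I + ⟪ib, ia⟫ := by
      have hr : Complex.I * ⟪φ₀, U (-(0:ℝ)) φ₀⟫ + Complex.I * ((0:ℝ) : ℂ) * (-⟪φ₀, ia⟫)
          + -(-⟪ib, ia⟫) = Complex.I + ⟪ib, ia⟫ := by
        simp only [neg_zero, u0, hnorm, Complex.ofReal_zero, mul_zero, zero_mul, add_zero,
          mul_one, neg_neg]
      calc ⟪ia, ib⟫ = _ := huniq
        _ = Complex.I + ⟪ib, ia⟫ := by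
            simpa [u0, hnorm] using hr
    rw [hia, hib, inner_smul_left, inner_smul_right, inner_smul_left, inner_smul_right]
      at hval
    simp only [Complex.conj_I, neg_mul, ← mul_assoc, Complex.I_mul_I, one_mul,
      neg_neg] at hval
    exact hval
  -- Hilbert basis of S and Parseval
  haveI : CompleteSpace S := hSclosed.completeSpace_coe
  set eS : ℤ × ℤ → S := fun p => ⟨e p, hmemS p⟩ with heS
  have honS : Orthonormal ℂ eS := by
    rw [orthonormal_iff_ite]
    intro p q
    have h := horthE p q
    simpa [heS, Submodule.coe_inner] using h
  have hbot : (Submodule.span ℂ (Set.range eS))ᗮ = ⊥ := by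
    rw [Submodule.eq_bot_iff]
    intro ψ hψ
    have hcoeffs : ∀ m n : ℤ, ⟪gaborOp U V (1, 0) (0, 1) m n φ₀, (ψ : H)⟫ = 0 := by
      intro m n
      rw [gb]
      have h := (Submodule.mem_orthogonal _ ψ).1 hψ (eS (m, n))
        (Submodule.subset_span ⟨(m, n), rfl⟩)
      simpa [heS, Submodule.coe_inner] using h
    have hz : (ψ : H) = 0 := hcomplete (ψ : H) ψ.2 hcoeffs
    exact Subtype.ext hz
  set hbasis : HilbertBasis (ℤ × ℤ) ℂ S := HilbertBasis.mkOfOrthogonalEqBot honS hbot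
    with hbasisdef
  have hb_coe : ∀ p, (hbasis p : H) = e p := by
    intro p
    rw [hbasisdef, HilbertBasis.coe_mkOfOrthogonalEqBot]
  have hP1 : ⟪a, bv⟫ = ∑' p : ℤ × ℤ, ⟪a, e p⟫ * ⟪e p, bv⟫ := by
    have h := (hbasis.tsum_inner_mul_inner (⟨a, haS⟩ : S) (⟨bv, hbS⟩ : S)).symm
    rw [Submodule.coe_inner] at h
    refine h.trans ?_
    refine tsum_congr ?_
    intro p
    rw [Submodule.coe_inner, Submodule.coe_inner, hb_coe]
  have hP2 : ∑' q : ℤ × ℤ, ⟪bv, e q⟫ * ⟪e q, a⟫ = ⟪bv, a⟫ := by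
    have h := hbasis.tsum_inner_mul_inner (⟨bv, hbS⟩ : S) (⟨a, haS⟩ : S)
    rw [Submodule.coe_inner] at h
    refine Eq.trans ?_ h
    refine tsum_congr ?_
    intro p
    rw [Submodule.coe_inner, Submodule.coe_inner, hb_coe]
  have hterm : ∀ p : ℤ × ℤ, ⟪a, e p⟫ * ⟪e p, bv⟫ = ⟪bv, e (-p)⟫ * ⟪e (-p), a⟫ := by
    intro p
    have h1 := IdA p
    have h2 := IdB (-p)
    rw [neg_neg] at h2
    have hE : Complex.exp (Complex.I * (((-p).1 : ℤ) : ℂ) * (((-p).2 : ℤ) : ℂ))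
        = Complex.exp (Complex.I * ((p.1 : ℤ) : ℂ) * ((p.2 : ℤ) : ℂ)) := by
      congr 1
      simp only [Prod.fst_neg, Prod.snd_neg]
      push_cast
      ring
    rw [hE] at h2
    rw [h1, h2]
    ring
  have hre : ∑' p : ℤ × ℤ, ⟪bv, e (-p)⟫ * ⟪e (-p), a⟫
      = ∑' q : ℤ × ℤ, ⟪bv, e q⟫ * ⟪e q, a⟫ := by
    have h := (Equiv.neg (ℤ × ℤ)).tsum_eq (fun q => ⟪bv, e q⟫ * ⟪e q, a⟫)
    simpa [Equiv.neg_apply] using h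
  have hfinal : ⟪a, bv⟫ = ⟪bv, a⟫ := by
    rw [hP1, tsum_congr hterm, hre, hP2]
  rw [hcomm] at hfinal
  exact Complex.I_ne_zero (by linear_combination hfinal)
end
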